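/- arXiv:2001.07564 — 2 statements merged into one kernel-verified Lean document; each statement's English description precedes it below -/
import Mathlib

section
/- Let n ≥ 2 and let d_1,…,d_n be positive integers with Σ d_i = 2(n−1) (the degree sequence of a tree on n vertices). Then Σ_{i=1}^n 1/d_i ≥ 2 + (n−2)/2, with equality when exactly two of the d_i equal 1 and the rest equal 2 (the path graph). -/
lemma inv_ge_aux (d : ℕ) (hd : 0 < d) : (3/2 - (d:ℝ)/2) ≤ 1 / (d:ℝ) := by
  have hd' : (0:ℝ) < d := by exact_mod_cast hd
  have key : (0:ℝ) ≤ ((d:ℝ) - 1) * ((d:ℝ) - 2) := by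
    rcases Nat.lt_or_ge d 3 with h | h
    · interval_cases d <;> norm_num
    · have : (3:ℝ) ≤ d := by exact_mod_cast h
      nlinarith
  rw [le_div_iff₀ hd']
  nlinarith

lemma inv_eq_aux (d : ℕ) (hd : d = 1 ∨ d = 2) : (1:ℝ) / (d:ℝ) = 3/2 - (d:ℝ)/2 := by
  rcases hd with h | h <;> subst h <;> norm_num

/-- For `n ≥ 2` and positive integers `d_1, …, d_n` with `Σ d_i = 2(n-1)` (the degree
sequence of a tree on `n` vertices), we have `Σ 1/d_i ≥ 2 + (n-2)/2`, with equality when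
exactly two of the `d_i` equal `1` and the rest equal `2` (the path graph). -/
theorem tree_sum_inv_deg_ge (n : ℕ) (hn : 2 ≤ n) (d : Fin n → ℕ)
    (hpos : ∀ i, 0 < d i) (hsum : ∑ i, d i = 2 * (n - 1)) :
    (∑ i, (1 : ℝ) / (d i : ℝ) ≥ 2 + ((n : ℝ) - 2) / 2) ∧
      ((∃ i j : Fin n, i ≠ j ∧ d i = 1 ∧ d j = 1 ∧
          ∀ k, k ≠ i → k ≠ j → d k = 2) →
        ∑ i, (1 : ℝ) / (d i : ℝ) = 2 + ((n : ℝ) - 2) / 2) := by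
  have hn1 : (1:ℕ) ≤ n := le_trans one_le_two hn
  have hsumR : ∑ i, (d i : ℝ) = 2 * ((n:ℝ) - 1) := by
    have := congrArg (Nat.cast : ℕ → ℝ) hsum
    push_cast [Nat.cast_sub hn1] at this
    simpa using this
  have hlow : ∑ i, (3/2 - (d i:ℝ)/2) = 2 + ((n : ℝ) - 2) / 2 := by
    rw [Finset.sum_sub_distrib, Finset.sum_const, ← Finset.sum_div, hsumR]
    simp [Finset.card_univ]
    ring
  constructor
  · have h : ∑ i, (3/2 - (d i:ℝ)/2) ≤ ∑ i, (1:ℝ) / (d i : ℝ) := Finset.sum_le_sum (fun i _ => inv_ge_aux (d i) (hpos i))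
    rw [hlow] at h
    exact h
  · rintro ⟨i, j, hij, hi, hj, hk⟩
    rw [← hlow]
    refine Finset.sum_congr rfl fun k _ => inv_eq_aux (d k) ?_
    by_cases h1 : k = i
    · subst h1; exact Or.inl hi
    by_cases h2 : k = j
    · subst h2; exact Or.inl hj
    · exact Or.inr (hk k h1 h2)
end

section
/- For any n ≥ 2 and any positive integers d_1,…,d_n with Σ d_i = 2(n−1), we have Σ_{i=1}^n 1/d_i ≤ (n−1) + 1/(n−1), with equality if and only if one d_i equals n−1 and the remaining n−1 of them equal 1 (the star). -/
private lemma aux_eq (N x : ℝ) (hN1 : N - 1 ≠ 0) :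
    1 - (x - 1) / (N - 1) = (N - x) / (N - 1) := by
  field_simp
  ring

private lemma aux_le (N x : ℝ) (hx1 : 1 ≤ x) (hxN : x ≤ N - 1) :
    1 / x ≤ 1 - (x - 1) / (N - 1) := by
  have h0 : 0 < x := by linarith
  have hN1 : 0 < N - 1 := by linarith
  rw [aux_eq N x (ne_of_gt hN1), div_le_div_iff₀ h0 hN1]
  nlinarith [mul_nonneg (sub_nonneg.2 hx1) (sub_nonneg.2 hxN)]

private lemma aux_lt (N x : ℝ) (hx1 : 1 < x) (hxN : x < N - 1) :
    1 / x < 1 - (x - 1) / (N - 1) := by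
  have h0 : 0 < x := by linarith
  have hN1 : 0 < N - 1 := by linarith
  rw [aux_eq N x (ne_of_gt hN1), div_lt_div_iff₀ h0 hN1]
  nlinarith [mul_pos (sub_pos.2 hx1) (sub_pos.2 hxN)]

/-- For `n ≥ 2` and positive integers `d_1, …, d_n` with `Σ d_i = 2(n-1)`, we have
`Σ 1/d_i ≤ (n-1) + 1/(n-1)`, with equality if and only if one `d_i` equals `n-1` and the
remaining ones all equal `1` (the star). -/
theorem tree_sum_inv_deg_le (n : ℕ) (hn : 2 ≤ n) (d : Fin n → ℕ)
    (hpos : ∀ i, 0 < d i) (hsum : ∑ i, d i = 2 * (n - 1)) :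
    (∑ i, (1 : ℝ) / (d i : ℝ) ≤ ((n : ℝ) - 1) + 1 / ((n : ℝ) - 1)) ∧
      (∑ i, (1 : ℝ) / (d i : ℝ) = ((n : ℝ) - 1) + 1 / ((n : ℝ) - 1) ↔
        ∃ i : Fin n, d i = n - 1 ∧ ∀ j, j ≠ i → d j = 1) := by
  have hn1 : (1 : ℕ) ≤ n := by omega
  have hnR : (2 : ℝ) ≤ (n : ℝ) := by exact_mod_cast hn
  have hN1 : (0 : ℝ) < (n : ℝ) - 1 := by linarith
  -- each degree is at most n - 1
  have hdle : ∀ i, d i ≤ n - 1 := by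
    intro i
    have h1 : ∑ j ∈ Finset.univ.erase i, d j = ∑ j, d j - d i := by
      rw [← Finset.add_sum_erase Finset.univ d (Finset.mem_univ i)]
      omega
    have h2 : (Finset.univ.erase i).card ≤ ∑ j ∈ Finset.univ.erase i, d j := by
      calc (Finset.univ.erase i).card
          = ∑ j ∈ Finset.univ.erase i, 1 := by simp
        _ ≤ ∑ j ∈ Finset.univ.erase i, d j :=
            Finset.sum_le_sum fun j _ => hpos j
    have h3 : (Finset.univ.erase i).card = n - 1 := by
      simp [Finset.card_erase_of_mem]
    have h4 : d i ≤ ∑ j, d j := Finset.single_le_sum (fun j _ => Nat.zero_le _) (Finset.mem_univ i)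
    omega
  have hcastle : ∀ i, (d i : ℝ) ≤ (n : ℝ) - 1 := by
    intro i
    have := hdle i
    have h : (d i : ℝ) ≤ ((n - 1 : ℕ) : ℝ) := Nat.cast_le.2 this
    rwa [Nat.cast_sub hn1, Nat.cast_one] at h
  have hcast1 : ∀ i, (1 : ℝ) ≤ (d i : ℝ) := by
    intro i
    exact_mod_cast hpos i
  -- the cast of the degree sum
  have hsumR : ∑ i, (d i : ℝ) = 2 * ((n : ℝ) - 1) := by
    have : ((∑ i, d i : ℕ) : ℝ) = 2 * ((n : ℝ) - 1) := by
      rw [hsum, Nat.cast_mul, Nat.cast_sub hn1]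
      norm_num
    rwa [Nat.cast_sum] at this
  -- sum of the upper bounds
  have hRHS : ∑ i, (1 - ((d i : ℝ) - 1) / ((n : ℝ) - 1)) =
      ((n : ℝ) - 1) + 1 / ((n : ℝ) - 1) := by
    rw [Finset.sum_sub_distrib, ← Finset.sum_div, Finset.sum_sub_distrib, hsumR]
    simp only [Finset.sum_const, Finset.card_univ, Fintype.card_fin, nsmul_eq_mul, mul_one]
    field_simp
    ring
  have term_le : ∀ i ∈ Finset.univ, (1 : ℝ) / (d i : ℝ) ≤ 1 - ((d i : ℝ) - 1) / ((n : ℝ) - 1) :=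
    fun i _ => aux_le _ _ (hcast1 i) (hcastle i)
  have hle : ∑ i, (1 : ℝ) / (d i : ℝ) ≤ ((n : ℝ) - 1) + 1 / ((n : ℝ) - 1) :=
    (Finset.sum_le_sum term_le).trans (le_of_eq hRHS)
  refine ⟨hle, ?_, ?_⟩
  · -- equality implies star
    intro heq
    -- each d i is 1 or n - 1
    have hdich : ∀ i, d i = 1 ∨ d i = n - 1 := by
      intro i
      by_contra h
      push_neg at h
      obtain ⟨h1, h2⟩ := h
      have hd2 : 2 ≤ d i := by have := hpos i; omega
      have hdn2 : d i ≤ n - 2 := by have := hdle i; omega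
      have hx1 : (1 : ℝ) < (d i : ℝ) := by exact_mod_cast hd2
      have hxN : (d i : ℝ) < (n : ℝ) - 1 := by
        have hcle : (d i : ℝ) ≤ ((n - 2 : ℕ) : ℝ) := Nat.cast_le.2 hdn2
        rw [Nat.cast_sub hn] at hcle
        push_cast at hcle
        linarith
      have hstrict := aux_lt (n : ℝ) (d i : ℝ) hx1 hxN
      have hlt : ∑ k, (1 : ℝ) / (d k : ℝ) < ∑ k, (1 - ((d k : ℝ) - 1) / ((n : ℝ) - 1)) :=
        Finset.sum_lt_sum term_le ⟨i, Finset.mem_univ i, hstrict⟩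
      rw [hRHS] at hlt
      linarith
    by_cases he : ∃ i, d i = n - 1
    · obtain ⟨i, hi⟩ := he
      refine ⟨i, hi, ?_⟩
      intro j hj
      rcases hdich j with h1 | h2
      · exact h1
      · by_cases h2n : n = 2
        · rw [h2]; omega
        · exfalso
          have hn3 : 3 ≤ n := by omega
          have hs1 : ∑ k, d k = d i + ∑ k ∈ Finset.univ.erase i, d k :=
            (Finset.add_sum_erase _ _ (Finset.mem_univ i)).symm
          have hjmem : j ∈ Finset.univ.erase i := Finset.mem_erase.2 ⟨hj, Finset.mem_univ j⟩
          have hs2 : ∑ k ∈ Finset.univ.erase i, d k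
              = d j + ∑ k ∈ (Finset.univ.erase i).erase j, d k :=
            (Finset.add_sum_erase _ _ hjmem).symm
          have hc : ((Finset.univ.erase i).erase j).card = n - 2 := by
            rw [Finset.card_erase_of_mem hjmem, Finset.card_erase_of_mem (Finset.mem_univ i)]
            simp only [Finset.card_univ, Fintype.card_fin]
            omega
          have hge : n - 2 ≤ ∑ k ∈ (Finset.univ.erase i).erase j, d k := by
            calc n - 2 = ∑ _k ∈ (Finset.univ.erase i).erase j, 1 := by
                  rw [Finset.sum_const, smul_eq_mul, mul_one, hc]
              _ ≤ _ := Finset.sum_le_sum fun k _ => hpos k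
          omega
    · have hall : ∀ k, d k = 1 := fun k => (hdich k).resolve_right (fun h => he ⟨k, h⟩)
      have hsn : ∑ k, d k = n := by simp [hall]
      have hn2 : n = 2 := by omega
      refine ⟨⟨0, by omega⟩, ?_, fun j _ => hall j⟩
      rw [hall]; omega
  · -- star implies equality
    rintro ⟨i, hi, hothers⟩
    have hcard : (Finset.univ.erase i).card = n - 1 := by
      simp [Finset.card_erase_of_mem]
    have hrest : ∑ j ∈ Finset.univ.erase i, (1 : ℝ) / (d j : ℝ) = ((n : ℝ) - 1) := by
      have : ∀ j ∈ Finset.univ.erase i, (1 : ℝ) / (d j : ℝ) = 1 := by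
        intro j hj
        rw [hothers j (Finset.ne_of_mem_erase hj)]
        norm_num
      rw [Finset.sum_congr rfl this, Finset.sum_const, hcard, nsmul_eq_mul, mul_one,
        Nat.cast_sub hn1, Nat.cast_one]
    have hdi : (d i : ℝ) = (n : ℝ) - 1 := by
      rw [hi, Nat.cast_sub hn1, Nat.cast_one]
    rw [← Finset.add_sum_erase Finset.univ _ (Finset.mem_univ i), hrest, hdi]
    ring
end
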